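/- If A ⊇ B is H-separable and V, W are right A-modules such that V is isomorphic to a direct summand of W as B-modules (via restriction), then V is isomorphic to a direct summand of W^m as A-modules for some m ∈ ℕ. -/

import Mathlib

/-!  A noncommutative relative tensor product `L ⊗_C R` for a ring `C` mapping
into rings `L` (acting on the right through `f`) and `R` (acting on the left
through `g`), together with the outer left `L`-action `lact`, the outer right
`R`-action `ract`, a lifting principle for balanced biadditive maps, and the
multiplication map. -/

open scoped TensorProduct

noncomputable section
namespace NCT

variable {C L R : Type*} [Ring C] [Ring L] [Ring R]

/-- The submodule of relations `(l * f c) ⊗ r - l ⊗ (g c * r)`. -/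
def rel (f : C →+* L) (g : C →+* R) : Submodule ℤ (L ⊗[ℤ] R) :=
  Submodule.span ℤ
    {x | ∃ (l : L) (c : C) (r : R), x = (l * f c) ⊗ₜ[ℤ] r - l ⊗ₜ[ℤ] (g c * r)}

/-- The relative tensor product `L ⊗_C R`. -/
def Tens (f : C →+* L) (g : C →+* R) : Type _ := (L ⊗[ℤ] R) ⧸ rel f g

instance (f : C →+* L) (g : C →+* R) : AddCommGroup (Tens f g) :=
  inferInstanceAs (AddCommGroup ((L ⊗[ℤ] R) ⧸ rel f g))

variable (f : C →+* L) (g : C →+* R)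

/-- The canonical image of `l ⊗ r` in `L ⊗_C R`. -/
def tmul (l : L) (r : R) : Tens f g := Submodule.Quotient.mk (l ⊗ₜ[ℤ] r)

lemma tmul_rel (l : L) (c : C) (r : R) :
    tmul f g (l * f c) r = tmul f g l (g c * r) := by
  refine (Submodule.Quotient.eq _).2 ?_
  exact Submodule.subset_span ⟨l, c, r, rfl⟩

lemma tmul_add_left (l l' : L) (r : R) :
    tmul f g (l + l') r = tmul f g l r + tmul f g l' r := by
  show Submodule.Quotient.mk _ = _
  rw [TensorProduct.add_tmul, Submodule.Quotient.mk_add]; rfl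

lemma tmul_add_right (l : L) (r r' : R) :
    tmul f g l (r + r') = tmul f g l r + tmul f g l r' := by
  show Submodule.Quotient.mk _ = _
  rw [TensorProduct.tmul_add, Submodule.Quotient.mk_add]; rfl

/-- Package a biadditive map as a bundled `AddMonoidHom`-valued hom. -/
def mkBilin {M N P : Type*} [AddCommGroup M] [AddCommGroup N] [AddCommGroup P]
    (φ : M → N → P)
    (h1 : ∀ m m' n, φ (m + m') n = φ m n + φ m' n)
    (h2 : ∀ m n n', φ m (n + n') = φ m n + φ m n') : M →+ N →+ P :=
  AddMonoidHom.mk' (fun m => AddMonoidHom.mk' (φ m) (h2 m))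
    (fun m m' => by ext n; exact h1 m m' n)

@[simp] lemma mkBilin_apply {M N P : Type*} [AddCommGroup M] [AddCommGroup N] [AddCommGroup P]
    (φ : M → N → P) (h1 h2) (m : M) (n : N) : mkBilin φ h1 h2 m n = φ m n := rfl

/-- Lift a balanced biadditive map to the relative tensor product. -/
def lift {P : Type*} [AddCommGroup P] (φ : L →+ R →+ P)
    (hbal : ∀ l c r, φ (l * f c) r = φ l (g c * r)) : Tens f g →+ P :=
  (Submodule.liftQ (rel f g)
    (TensorProduct.liftAddHom φ (by
      intro n l r
      simp only [AddMonoidHom.map_zsmul, AddMonoidHom.smul_apply]) ).toIntLinearMap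
    (by
      rw [rel, Submodule.span_le]
      rintro x ⟨l, c, r, rfl⟩
      simp only [SetLike.mem_coe, LinearMap.mem_ker, AddMonoidHom.coe_toIntLinearMap,
        map_sub, TensorProduct.liftAddHom_tmul]
      rw [hbal, sub_self])).toAddMonoidHom

@[simp] lemma lift_tmul {P : Type*} [AddCommGroup P] (φ : L →+ R →+ P)
    (hbal : ∀ l c r, φ (l * f c) r = φ l (g c * r)) (l : L) (r : R) :
    lift f g φ hbal (tmul f g l r) = φ l r := rfl

/-- The outer left action of `L` on `L ⊗_C R`. -/
def lact (l : L) : Tens f g →+ Tens f g :=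
  lift f g (mkBilin (fun l' r => tmul f g (l * l') r)
      (fun a b r => by rw [mul_add, tmul_add_left])
      (fun a r s => by rw [tmul_add_right]))
    (fun l' c r => by simp only [mkBilin_apply]; rw [← mul_assoc, tmul_rel])

@[simp] lemma lact_tmul (l l' : L) (r : R) :
    lact f g l (tmul f g l' r) = tmul f g (l * l') r := rfl

/-- The outer right action of `R` on `L ⊗_C R`. -/
def ract (r : R) : Tens f g →+ Tens f g :=
  lift f g (mkBilin (fun l' r' => tmul f g l' (r' * r))
      (fun a b r' => by rw [tmul_add_left])
      (fun a r' s => by rw [add_mul, tmul_add_right]))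
    (fun l' c r' => by simp only [mkBilin_apply]; rw [tmul_rel, mul_assoc])

@[simp] lemma ract_tmul (r r' : R) (l : L) :
    ract f g r (tmul f g l r') = tmul f g l (r' * r) := rfl

/-- The map induced on relative tensor products by a ring map on the left factor. -/
def mapLeft {L' : Type*} [Ring L'] (h : L →+* L') :
    Tens f g →+ Tens (h.comp f) g :=
  lift f g (mkBilin (fun l r => tmul (h.comp f) g (h l) r)
      (fun a b r => by rw [map_add, tmul_add_left])
      (fun a r s => by rw [tmul_add_right]))
    (fun l c r => by
      simp only [mkBilin_apply, map_mul]
      exact tmul_rel (h.comp f) g (h l) c r)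

@[simp] lemma mapLeft_tmul {L' : Type*} [Ring L'] (h : L →+* L') (l : L) (r : R) :
    mapLeft f g h (tmul f g l r) = tmul (h.comp f) g (h l) r := rfl

/-- The multiplication map `L ⊗_C R → R`, `l ⊗ r ↦ jl l * r`, for a ring map
`jl : L → R` compatible with the two maps from `C`. -/
def mulMap (jl : L →+* R) (hcomp : ∀ c, jl (f c) = g c) : Tens f g →+ R :=
  lift f g (mkBilin (fun l r => jl l * r)
      (fun a b r => by rw [map_add, add_mul])
      (fun a r s => by rw [mul_add]))
    (fun l c r => by simp only [mkBilin_apply]; rw [map_mul, hcomp, mul_assoc])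

@[simp] lemma mulMap_tmul (jl : L →+* R) (hcomp : ∀ c, jl (f c) = g c) (l : L) (r : R) :
    mulMap f g jl hcomp (tmul f g l r) = jl l * r := rfl

/-- Induction principle: every element of `L ⊗_C R` is built from `tmul`s. -/
lemma tens_induction {p : Tens f g → Prop} (zero : p 0)
    (tm : ∀ l r, p (tmul f g l r)) (add : ∀ x y, p x → p y → p (x + y)) :
    ∀ x, p x := by
  intro x
  obtain ⟨y, rfl⟩ := Submodule.Quotient.mk_surjective _ x
  induction y using TensorProduct.induction_on with
  | zero => exact zero
  | tmul l r => exact tm l r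
  | add a b ha hb =>
      rw [Submodule.Quotient.mk_add]
      exact add _ _ ha hb

end NCT
end

noncomputable section
open NCT

/-- The tower `A ⊇ B ⊇ C` (given by injective ring maps `ι : C → B`, `j : B → A`) is
*left relative H-separable*: `B ⊗_C A ⊕ * ≅ A^n` as `B`-`A`-bimodules. -/
def LeftRelHSep {C B A : Type*} [Ring C] [Ring B] [Ring A]
    (ι : C →+* B) (j : B →+* A) (n : ℕ) : Prop :=
  ∃ (i : Tens ι (j.comp ι) →+ (Fin n → A)) (p : (Fin n → A) →+ Tens ι (j.comp ι)),
    (∀ (b : B) x, i (lact ι (j.comp ι) b x) = fun k => j b * i x k) ∧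
    (∀ (a : A) x, i (ract ι (j.comp ι) a x) = fun k => i x k * a) ∧
    (∀ (b : B) v, p (fun k => j b * v k) = lact ι (j.comp ι) b (p v)) ∧
    (∀ (a : A) v, p (fun k => v k * a) = ract ι (j.comp ι) a (p v)) ∧
    ∀ x, p (i x) = x

/-- `B` is a *left relative separable extension of `C` in `A`*: the multiplication map
`μ : B ⊗_C A → A` splits as a `B`-`A`-bimodule epimorphism. -/
def LeftRelSep {C B A : Type*} [Ring C] [Ring B] [Ring A]
    (ι : C →+* B) (j : B →+* A) : Prop :=
  ∃ σ : A →+ Tens ι (j.comp ι),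
    (∀ (b : B) (a : A), σ (j b * a) = lact ι (j.comp ι) b (σ a)) ∧
    (∀ (a a' : A), σ (a * a') = ract ι (j.comp ι) a' (σ a)) ∧
    ∀ a, mulMap ι (j.comp ι) j (fun _ => rfl) (σ a) = a

/-- `B ⊇ C` is a separable extension: there is a `B`-central element
`e ∈ B ⊗_C B` with `μ(e) = 1`. -/
def IsSepExt {C B : Type*} [Ring C] [Ring B] (ι : C →+* B) : Prop :=
  ∃ e : Tens ι ι, (∀ b : B, lact ι ι b e = ract ι ι b e) ∧
    mulMap ι ι (RingHom.id B) (fun _ => rfl) e = 1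

/-- `A ⊇ B` is H-separable: `A ⊗_B A ⊕ * ≅ A^n` as `A`-`A`-bimodules. -/
def IsHSep {B A : Type*} [Ring B] [Ring A] (j : B →+* A) : Prop :=
  ∃ (n : ℕ) (i : Tens j j →+ (Fin n → A)) (p : (Fin n → A) →+ Tens j j),
    (∀ (a : A) x, i (lact j j a x) = fun k => a * i x k) ∧
    (∀ (a : A) x, i (ract j j a x) = fun k => i x k * a) ∧
    (∀ (a : A) v, p (fun k => a * v k) = lact j j a (p v)) ∧
    (∀ (a : A) v, p (fun k => v k * a) = ract j j a (p v)) ∧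
    ∀ x, p (i x) = x

/-! H-separability yields a Hirata system: `1 ⊗ 1 = ∑ₖ uₖ eₖ` in `A ⊗_B A`, with the `uₖ`
centralizing `B` and the `eₖ` centralized by `A`. Transferring a `B`-linear map `F : V → W` along
`x = ∑ a ⊗ a'` gives `v ↦ ∑ F (v a) a'`, which is `A`-linear when `x` is `A`-central.
If `i : V → W` is a `B`-linear section of `p`, then `v ↦ (i v uₖ)ₖ` is a `B`-linear section of the
`A`-linear map `w ↦ ∑ₖ transfer_{eₖ}(p)(wₖ)` on `Wⁿ`, because `∑ₖ uₖ eₖ = 1 ⊗ 1`.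
A Hirata system also yields a separability element: the central elements `μ(eₖ)` generate the unit
ideal of the centre by Nakayama, since `A^B = ∑ₖ Z(A) uₖ` and `∑ₖ uₖ μ(eₖ) = 1`. Transferring the
`B`-linear section along it makes it `A`-linear.
-/

open MulOpposite

namespace NCT

variable {C L R : Type*} [Ring C] [Ring L] [Ring R] (f : C →+* L) (g : C →+* R)

theorem hom_ext {P : Type*} [AddCommGroup P] {φ ψ : Tens f g →+ P}
    (h : ∀ l r, φ (tmul f g l r) = ψ (tmul f g l r)) : φ = ψ :=
  AddMonoidHom.ext (tens_induction f g (by simp) h fun x y hx hy => by simp [hx, hy])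

theorem lact_lact (l l' : L) (x : Tens f g) : lact f g l (lact f g l' x) = lact f g (l * l') x :=
  DFunLike.congr_fun (hom_ext f g (φ := (lact f g l).comp (lact f g l')) (ψ := lact f g (l * l'))
    fun _ _ => by simp [mul_assoc]) x

theorem lact_ract (l : L) (r : R) (x : Tens f g) :
    lact f g l (ract f g r x) = ract f g r (lact f g l x) :=
  DFunLike.congr_fun (hom_ext f g (φ := (lact f g l).comp (ract f g r))
    (ψ := (ract f g r).comp (lact f g l)) fun _ _ => by simp) x

theorem mulMap_lact (jl : L →+* R) (hcomp : ∀ c, jl (f c) = g c) (l : L) (x : Tens f g) :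
    mulMap f g jl hcomp (lact f g l x) = jl l * mulMap f g jl hcomp x :=
  DFunLike.congr_fun (hom_ext f g (φ := (mulMap f g jl hcomp).comp (lact f g l))
    (ψ := (AddMonoidHom.mulLeft (jl l)).comp (mulMap f g jl hcomp))
    fun _ _ => by simp [mul_assoc]) x

theorem mulMap_ract (jl : L →+* R) (hcomp : ∀ c, jl (f c) = g c) (r : R) (x : Tens f g) :
    mulMap f g jl hcomp (ract f g r x) = mulMap f g jl hcomp x * r :=
  DFunLike.congr_fun (hom_ext f g (φ := (mulMap f g jl hcomp).comp (ract f g r))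
    (ψ := (AddMonoidHom.mulRight r).comp (mulMap f g jl hcomp))
    fun _ _ => by simp [mul_assoc]) x

end NCT

section Transfer

variable {B A : Type*} [Ring B] [Ring A] (j : B →+* A)
variable {V W : Type*} [AddCommGroup V] [AddCommGroup W] [Module Aᵐᵒᵖ V] [Module Aᵐᵒᵖ W]

def IsRightLinear (F : V →+ W) : Prop :=
  ∀ (b : B) (v : V), F (op (j b) • v) = op (j b) • F v

def transfer (F : V →+ W) (hF : IsRightLinear j F) : Tens j j →+ V →+ W :=
  lift j j (mkBilin (fun a a' => (DistribSMul.toAddMonoidHom W (op a')).comp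
      (F.comp (DistribSMul.toAddMonoidHom V (op a))))
    (fun a a' a'' => by ext v; simp [add_smul])
    (fun a a' a'' => by ext v; simp [add_smul]))
    (fun a b a' => by ext v; simp [mul_smul, hF _ (op a • v)])

@[simp] theorem transfer_tmul (F : V →+ W) (hF : IsRightLinear j F) (a a' : A) (v : V) :
    transfer j F hF (tmul j j a a') v = op a' • F (op a • v) := rfl

variable (F : V →+ W) (hF : IsRightLinear j F)

theorem transfer_lact (a : A) (x : Tens j j) (v : V) :
    transfer j F hF (lact j j a x) v = transfer j F hF x (op a • v) := by
  induction x using tens_induction with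
  | zero => simp
  | tm l r => simp [mul_smul]
  | add x y hx hy => simp [hx, hy]

theorem transfer_ract (a : A) (x : Tens j j) (v : V) :
    transfer j F hF (ract j j a x) v = op a • transfer j F hF x v := by
  induction x using tens_induction with
  | zero => simp
  | tm l r => simp [mul_smul]
  | add x y hx hy => simp [hx, hy]

theorem isRightLinear_transfer_of_central {e : Tens j j}
    (he : ∀ a : A, lact j j a e = ract j j a e) :
    IsRightLinear (RingHom.id A) (transfer j F hF e) := fun a v => by
  rw [RingHom.id_apply, ← transfer_lact, he, transfer_ract]

theorem map_transfer_of_leftInverse {G : W →+ V} (hG : IsRightLinear (RingHom.id A) G)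
    (hGF : Function.LeftInverse G F) (x : Tens j j) (v : V) :
    G (transfer j F hF x v) = op (mulMap j j (RingHom.id A) (fun _ => rfl) x) • v := by
  induction x using tens_induction with
  | zero => simp
  | tm a a' =>
    simp only [transfer_tmul, mulMap_tmul, RingHom.id_apply, op_mul, mul_smul]
    exact (hG a' _).trans (congrArg _ (hGF _))
  | add x y hx hy => simp [hx, hy, add_smul]

end Transfer

theorem exists_algebraMap_sum_mul_eq_one {R A : Type*} [CommRing R] [Ring A] [Algebra R A]
    {n : ℕ} (u : Fin n → A) (d : Fin n → R) (h1 : (1 : A) ∈ Submodule.span R (Set.range u))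
    (hmul : ∀ i k, u i * u k ∈ Submodule.span R (Set.range u)) (hsum : ∑ k, d k • u k = 1) :
    ∃ z : Fin n → R, algebraMap R A (∑ k, z k * d k) = 1 := by
  set M := Submodule.span R (Set.range u)
  have hle : M ≤ Ideal.span (Set.range d) • M := by
    refine Submodule.span_le.2 ?_
    rintro _ ⟨i, rfl⟩
    have hexp : u i = ∑ k, d k • (u i * u k) := by
      conv_lhs => rw [← mul_one (u i), ← hsum, Finset.mul_sum]
      simp only [mul_smul_comm]
    rw [SetLike.mem_coe, hexp]
    exact Submodule.sum_mem _ fun k _ =>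
      Submodule.smul_mem_smul (Ideal.subset_span ⟨k, rfl⟩) (hmul i k)
  obtain ⟨r, hr, hr0⟩ := Submodule.exists_sub_one_mem_and_smul_eq_zero_of_fg_of_le_smul _ M
    (Submodule.fg_span (Set.finite_range u)) hle
  obtain ⟨z, hz⟩ := (Submodule.mem_span_range_iff_exists_fun R).1 (neg_mem hr)
  refine ⟨z, ?_⟩
  simp only [smul_eq_mul, neg_sub] at hz
  rw [hz, map_sub, map_one, Algebra.algebraMap_eq_smul_one, hr0 1 h1, sub_zero]

section Hirata

variable {B A : Type*} [Ring B] [Ring A] (j : B →+* A)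

structure HirataSystem where
  n : ℕ
  u : Fin n → A
  e : Fin n → Tens j j
  u_mem_centralizer : ∀ k, u k ∈ Subring.centralizer (Set.range j)
  e_central : ∀ k (a : A), lact j j a (e k) = ract j j a (e k)
  sum_lact_eq : ∑ k, lact j j (u k) (e k) = tmul j j 1 1

theorem IsHSep.nonempty_hirataSystem (h : IsHSep j) : Nonempty (HirataSystem j) := by
  obtain ⟨n, i, p, hil, hir, hpl, hpr, hpi⟩ := h
  have mul_single (k : Fin n) (a : A) :
      (fun m => a * (Pi.single k 1 : Fin n → A) m) = Pi.single k a := by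
    ext m; simp [Pi.single_apply]
  have single_mul (k : Fin n) (a : A) :
      (fun m => (Pi.single k 1 : Fin n → A) m * a) = Pi.single k a := by
    ext m; simp [Pi.single_apply]
  refine ⟨⟨n, i (tmul j j 1 1), fun k => p (Pi.single k 1), fun k => ?_, fun k a => ?_, ?_⟩⟩
  · rw [Subring.mem_centralizer_iff]
    rintro _ ⟨b, rfl⟩
    have hb : lact j j (j b) (tmul j j 1 1) = ract j j (j b) (tmul j j 1 1) := by
      simpa using tmul_rel j j 1 b 1
    exact congrFun (((hil _ _).symm.trans (congrArg i hb)).trans (hir _ _)) k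
  · rw [← hpl, mul_single, ← single_mul, hpr]
  · calc ∑ k, lact j j (i (tmul j j 1 1) k) (p (Pi.single k 1))
        = ∑ k, p (Pi.single k (i (tmul j j 1 1) k)) := by simp only [← hpl, mul_single]
      _ = tmul j j 1 1 := by rw [← map_sum, Finset.univ_sum_single, hpi]

def sandwich (c : A) (hc : c ∈ Subring.centralizer (Set.range j)) : Tens j j →+ A :=
  lift j j (mkBilin (fun x y => x * c * y)
      (fun x x' y => by rw [add_mul, add_mul])
      (fun x y y' => by rw [mul_add]))
    (fun x b y => by
      simp only [mkBilin_apply]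
      rw [mul_assoc x, Subring.mem_centralizer_iff.1 hc _ ⟨b, rfl⟩, ← mul_assoc x, mul_assoc])

@[simp] theorem sandwich_tmul (c : A) (hc : c ∈ Subring.centralizer (Set.range j)) (x y : A) :
    sandwich j c hc (tmul j j x y) = x * c * y := rfl

theorem sandwich_lact (c : A) (hc : c ∈ Subring.centralizer (Set.range j)) (a : A)
    (x : Tens j j) : sandwich j c hc (lact j j a x) = a * sandwich j c hc x :=
  DFunLike.congr_fun (hom_ext j j (φ := (sandwich j c hc).comp (lact j j a))
    (ψ := (AddMonoidHom.mulLeft a).comp (sandwich j c hc)) fun _ _ => by simp [mul_assoc]) x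

theorem sandwich_ract (c : A) (hc : c ∈ Subring.centralizer (Set.range j)) (a : A)
    (x : Tens j j) : sandwich j c hc (ract j j a x) = sandwich j c hc x * a :=
  DFunLike.congr_fun (hom_ext j j (φ := (sandwich j c hc).comp (ract j j a))
    (ψ := (AddMonoidHom.mulRight a).comp (sandwich j c hc)) fun _ _ => by simp [mul_assoc]) x

theorem mem_center_of_central {φ : Tens j j →+ A} (hl : ∀ a x, φ (lact j j a x) = a * φ x)
    (hr : ∀ a x, φ (ract j j a x) = φ x * a) {x : Tens j j}
    (hx : ∀ a, lact j j a x = ract j j a x) : φ x ∈ Subring.center A :=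
  Subring.mem_center_iff.2 fun a => by rw [← hl, hx, hr]

namespace HirataSystem

variable {j}

theorem centralizer_le_span (H : HirataSystem j) :
    (Subring.centralizer (Set.range j) : Set A) ⊆
      Submodule.span (Subring.center A) (Set.range H.u) := by
  intro c hc
  have hz : ∀ k, sandwich j c hc (H.e k) ∈ Subring.center A := fun k =>
    mem_center_of_central j (sandwich_lact j c hc) (sandwich_ract j c hc) (H.e_central k)
  have hc_eq : c = ∑ k, (⟨_, hz k⟩ : Subring.center A) • H.u k := calc
    c = sandwich j c hc (tmul j j 1 1) := by simp
    _ = ∑ k, H.u k * sandwich j c hc (H.e k) := by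
      simp only [← H.sum_lact_eq, map_sum, sandwich_lact]
    _ = ∑ k, (⟨_, hz k⟩ : Subring.center A) • H.u k :=
      Finset.sum_congr rfl fun k _ => Subring.mem_center_iff.1 (hz k) _
  rw [SetLike.mem_coe, hc_eq]
  exact Submodule.sum_mem _ fun k _ => Submodule.smul_mem _ _ (Submodule.subset_span ⟨k, rfl⟩)

theorem isSepExt (H : HirataSystem j) : IsSepExt j := by
  set μ := mulMap j j (RingHom.id A) fun _ => rfl
  have hd : ∀ k, μ (H.e k) ∈ Subring.center A := fun k =>
    mem_center_of_central j (mulMap_lact j j _ _) (mulMap_ract j j _ _) (H.e_central k)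
  have hsum : ∑ k, (⟨_, hd k⟩ : Subring.center A) • H.u k = 1 := calc
    _ = ∑ k, H.u k * μ (H.e k) :=
      Finset.sum_congr rfl fun k _ => (Subring.mem_center_iff.1 (hd k) _).symm
    _ = μ (tmul j j 1 1) := by simp only [← H.sum_lact_eq, map_sum, μ, mulMap_lact]; rfl
    _ = 1 := by simp [μ]
  have hcent := H.u_mem_centralizer
  obtain ⟨z, hz⟩ := exists_algebraMap_sum_mul_eq_one H.u _
    (H.centralizer_le_span (one_mem _))
    (fun i k => H.centralizer_le_span (mul_mem (hcent i) (hcent k))) hsum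
  refine ⟨∑ k, lact j j (z k) (H.e k), fun a => ?_, ?_⟩
  · simp only [map_sum]
    refine Finset.sum_congr rfl fun k _ => ?_
    rw [lact_lact, Subring.mem_center_iff.1 (z k).2 a, ← lact_lact, H.e_central, lact_ract]
  · rw [map_sum] at hz ⊢
    simp only [mulMap_lact]
    exact hz

end HirataSystem

end Hirata

section Summands

variable {B A : Type*} [Ring B] [Ring A] {j : B →+* A}
variable {V W : Type*} [AddCommGroup V] [AddCommGroup W] [Module Aᵐᵒᵖ V] [Module Aᵐᵒᵖ W]

theorem IsSepExt.exists_isRightLinear_leftInverse (hsep : IsSepExt j) {F : V →+ W}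
    (hF : IsRightLinear j F) {G : W →+ V} (hG : IsRightLinear (RingHom.id A) G)
    (hGF : Function.LeftInverse G F) :
    ∃ F' : V →+ W, IsRightLinear (RingHom.id A) F' ∧ Function.LeftInverse G F' := by
  obtain ⟨e, he, he1⟩ := hsep
  refine ⟨transfer j F hF e, isRightLinear_transfer_of_central j F hF he, fun v => ?_⟩
  rw [map_transfer_of_leftInverse j F hF hG hGF, he1, op_one, one_smul]

theorem HirataSystem.exists_isRightLinear_leftInverse_pi (H : HirataSystem j) {i : V →+ W}
    (hi : IsRightLinear j i) {p : W →+ V} (hp : IsRightLinear j p)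
    (hpi : Function.LeftInverse p i) :
    ∃ (F : V →+ (Fin H.n → W)) (G : (Fin H.n → W) →+ V), IsRightLinear j F ∧
      IsRightLinear (RingHom.id A) G ∧ Function.LeftInverse G F := by
  refine ⟨AddMonoidHom.pi fun k => (DistribSMul.toAddMonoidHom W (op (H.u k))).comp i,
    ∑ k, (transfer j p hp (H.e k)).comp (Pi.evalAddMonoidHom (fun _ => W) k),
    fun b v => ?_, fun a w => ?_, fun v => ?_⟩
  · funext k
    have hu : j b * H.u k = H.u k * j b :=
      Subring.mem_centralizer_iff.1 (H.u_mem_centralizer k) _ ⟨b, rfl⟩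
    simp only [AddMonoidHom.pi_apply, AddMonoidHom.comp_apply, DistribSMul.toAddMonoidHom_apply,
      Pi.smul_apply, hi b v, ← mul_smul, ← op_mul, hu]
  · simp only [AddMonoidHom.finsetSum_apply, AddMonoidHom.comp_apply, Pi.evalAddMonoidHom_apply,
      Pi.smul_apply, Finset.smul_sum]
    exact Finset.sum_congr rfl fun k _ =>
      isRightLinear_transfer_of_central j p hp (H.e_central k) a (w k)
  · calc _ = ∑ k, transfer j p hp (lact j j (H.u k) (H.e k)) (i v) := by
          simp [transfer_lact]
      _ = v := by rw [← AddMonoidHom.finsetSum_apply, ← map_sum, H.sum_lact_eq]; simp [hpi v]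

end Summands

theorem summand_of_restriction_summand_general
    {B A : Type*} [Ring B] [Ring A]
    (j : B →+* A) (hHsep : IsHSep j)
    (V W : Type*) [AddCommGroup V] [AddCommGroup W]
    [Module Aᵐᵒᵖ V] [Module Aᵐᵒᵖ W]
    (hVW : ∃ (i : V →+ W) (p : W →+ V),
      (∀ (b : B) (v : V), i (MulOpposite.op (j b) • v) = MulOpposite.op (j b) • i v) ∧
      (∀ (b : B) (w : W), p (MulOpposite.op (j b) • w) = MulOpposite.op (j b) • p w) ∧
      ∀ v, p (i v) = v) :
    ∃ (m : ℕ) (i : V →+ (Fin m → W)) (p : (Fin m → W) →+ V),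
      (∀ (a : A) (v : V), i (MulOpposite.op a • v) = fun k => MulOpposite.op a • i v k) ∧
      (∀ (a : A) (w : Fin m → W), p (fun k => MulOpposite.op a • w k) = MulOpposite.op a • p w) ∧
      ∀ v, p (i v) = v := by
  obtain ⟨H⟩ := hHsep.nonempty_hirataSystem
  obtain ⟨i, p, hi, hp, hpi⟩ := hVW
  obtain ⟨F, G, hF, hG, hGF⟩ := H.exists_isRightLinear_leftInverse_pi hi hp hpi
  obtain ⟨F', hF', hGF'⟩ := H.isSepExt.exists_isRightLinear_leftInverse hF hG hGF
  exact ⟨H.n, F', G, hF', hG, hGF'⟩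

/-- if `A ⊇ B` is H-separable and `V`, `W` are right `A`-modules with
`V` a direct summand of `W` as `B`-modules (by restriction), then `V` is a direct
summand of `W^m` as `A`-modules, for some `m`. -/
theorem summand_of_restriction_summand
    {B A : Type*} [Ring B] [Ring A]
    (j : B →+* A) (hj : Function.Injective j) (hHsep : IsHSep j)
    (V W : Type*) [AddCommGroup V] [AddCommGroup W]
    [Module Aᵐᵒᵖ V] [Module Aᵐᵒᵖ W]
    (hVW : ∃ (i : V →+ W) (p : W →+ V),
      (∀ (b : B) (v : V), i (MulOpposite.op (j b) • v) = MulOpposite.op (j b) • i v) ∧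
      (∀ (b : B) (w : W), p (MulOpposite.op (j b) • w) = MulOpposite.op (j b) • p w) ∧
      ∀ v, p (i v) = v) :
    ∃ (m : ℕ) (i : V →+ (Fin m → W)) (p : (Fin m → W) →+ V),
      (∀ (a : A) (v : V), i (MulOpposite.op a • v) = fun k => MulOpposite.op a • i v k) ∧
      (∀ (a : A) (w : Fin m → W), p (fun k => MulOpposite.op a • w k) = MulOpposite.op a • p w) ∧
      ∀ v, p (i v) = v :=
  summand_of_restriction_summand_general j hHsep V W hVW

end
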